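/- arXiv:1501.06630 — 2 statements merged into one kernel-verified Lean document; each statement's English description precedes it below -/
import Mathlib

section
/- Let ξ ~ N(π, σ²) with π > 0 and σ > 0, and define τ̂(ξ) = (1/σ)·(1 − Φ(ξ/σ))/φ(ξ/σ), where Φ and φ are the standard normal CDF and PDF. Then E[τ̂(ξ)] = 1/π. -/
/-!
The Mills ratio `R(y) = (1 - Φ(y)) / φ(y)` is a Laplace transform: substituting `t = y + s` in
`1 - Φ(y) = ∫_{t > y} φ(t) dt` and using `φ(y + s) = φ(y) e^{-ys - s²/2}` gives
`R(y) = ∫_0^∞ e^{-ys - s²/2} ds`. For `Z ~ N(m, 1)` the Gaussian moment generating function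
`E e^{-sZ} = e^{-ms + s²/2}` cancels the factor `e^{-s²/2}`, so by Fubini
`E R(Z) = ∫_0^∞ e^{-ms} ds = 1/m`. Finally `τ̂(ξ) = R(ξ/σ)/σ` with `ξ/σ ~ N(π/σ, 1)`.
-/

open MeasureTheory ProbabilityTheory Filter

/-- Standard normal density `φ`. -/
noncomputable def stdPDF (x : ℝ) : ℝ :=
  (Real.sqrt (2 * Real.pi))⁻¹ * Real.exp (-(x ^ 2) / 2)

/-- Standard normal CDF `Φ`. -/
noncomputable def stdCDF (x : ℝ) : ℝ := ∫ t in Set.Iic x, stdPDF t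

/-- Mills-ratio estimator `τ̂(x, σ²) = (1/σ)(1 − Φ(x/σ))/φ(x/σ)`. -/
noncomputable def millsTau (σ x : ℝ) : ℝ :=
  (1 / σ) * (1 - stdCDF (x / σ)) / stdPDF (x / σ)

open Set

lemma setIntegral_Ioi_comp_add_left {E : Type*} [NormedAddCommGroup E] [NormedSpace ℝ E]
    (f : ℝ → E) (a d : ℝ) : ∫ x in Ioi a, f (d + x) = ∫ x in Ioi (d + a), f x := by
  have h := (measurableEmbedding_addLeft d).setIntegral_map (μ := volume) f (Ioi (d + a))
  rw [map_add_left_eq_self] at h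
  simpa using h.symm

lemma stdPDF_eq_gaussianPDFReal : stdPDF = gaussianPDFReal 0 1 := by
  ext x
  simp [stdPDF, gaussianPDFReal]

lemma stdPDF_pos (x : ℝ) : 0 < stdPDF x :=
  stdPDF_eq_gaussianPDFReal ▸ gaussianPDFReal_pos _ _ _ one_ne_zero

lemma stdPDF_add (y s : ℝ) :
    stdPDF (y + s) = stdPDF y * Real.exp (-(y * s) - s ^ 2 / 2) := by
  rw [stdPDF, stdPDF, mul_assoc, ← Real.exp_add]
  ring_nf

lemma one_sub_stdCDF (y : ℝ) : 1 - stdCDF y = ∫ t in Ioi y, stdPDF t := by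
  have hint : Integrable stdPDF := stdPDF_eq_gaussianPDFReal ▸ integrable_gaussianPDFReal 0 1
  have htotal : ∫ t, stdPDF t = 1 :=
    stdPDF_eq_gaussianPDFReal ▸ integral_gaussianPDFReal_eq_one 0 one_ne_zero
  rw [← htotal, ← intervalIntegral.integral_Iic_add_Ioi hint.integrableOn hint.integrableOn,
    stdCDF, add_sub_cancel_left]

noncomputable def millsRatio (y : ℝ) : ℝ := (1 - stdCDF y) / stdPDF y

lemma millsRatio_eq_integral_exp (y : ℝ) :
    millsRatio y = ∫ s in Ioi 0, Real.exp (-(y * s) - s ^ 2 / 2) := by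
  have hshift := setIntegral_Ioi_comp_add_left stdPDF 0 y
  rw [add_zero] at hshift
  rw [millsRatio, one_sub_stdCDF, ← hshift]
  simp_rw [stdPDF_add, integral_const_mul]
  field_simp [(stdPDF_pos y).ne']

lemma integral_exp_neg_mul_sub_gaussianReal (m : ℝ) (v : NNReal) (s : ℝ) :
    ∫ y, Real.exp (-(y * s) - v * s ^ 2 / 2) ∂gaussianReal m v = Real.exp (-m * s) := by
  have hmgf := congrFun (mgf_id_gaussianReal (μ := m) (v := v)) (-s)
  simp_rw [mgf, id, sub_eq_add_neg, Real.exp_add] at hmgf ⊢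
  rw [integral_mul_const]
  simp_rw [mul_comm _ s, ← neg_mul, hmgf, ← Real.exp_add]
  ring_nf

lemma integrable_exp_neg_mul_sub_gaussianReal_prod {m : ℝ} (hm : 0 < m) (v : NNReal) :
    Integrable (fun p : ℝ × ℝ => Real.exp (-(p.1 * p.2) - v * p.2 ^ 2 / 2))
      ((gaussianReal m v).prod (volume.restrict (Ioi 0))) := by
  refine (integrable_prod_iff' (by fun_prop)).2 ⟨ae_of_all _ fun s => ?_, ?_⟩
  · simp_rw [sub_eq_add_neg, Real.exp_add, mul_comm _ s, ← neg_mul]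
    exact (integrable_exp_mul_gaussianReal (-s)).mul_const _
  · simp_rw [Real.norm_eq_abs, abs_of_pos (Real.exp_pos _),
      integral_exp_neg_mul_sub_gaussianReal]
    exact integrableOn_exp_mul_Ioi (neg_lt_zero.2 hm) 0

theorem integral_millsRatio_gaussianReal {m : ℝ} (hm : 0 < m) :
    ∫ y, millsRatio y ∂gaussianReal m 1 = m⁻¹ := by
  have hint := integrable_exp_neg_mul_sub_gaussianReal_prod hm 1
  have hmgf := integral_exp_neg_mul_sub_gaussianReal m 1
  simp only [NNReal.coe_one, one_mul] at hint hmgf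
  simp_rw [millsRatio_eq_integral_exp]
  rw [integral_integral_swap (f := fun y s => Real.exp (-(y * s) - s ^ 2 / 2)) hint]
  simp_rw [hmgf]
  rw [integral_exp_mul_Ioi (neg_lt_zero.2 hm)]
  simp

/-- If ξ ~ N(π, σ²) with π > 0, σ > 0, then E[τ̂(ξ)] = 1/π. -/
theorem stmt0 (π σ : ℝ) (hπ : 0 < π) (hσ : 0 < σ) :
    ∫ x, millsTau σ x ∂(gaussianReal π ⟨σ ^ 2, sq_nonneg σ⟩) = 1 / π := by
  have hlaw : (gaussianReal π ⟨σ ^ 2, sq_nonneg σ⟩).map (· / σ) = gaussianReal (π / σ) 1 := by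
    rw [gaussianReal_map_div_const (v := ⟨σ ^ 2, sq_nonneg σ⟩) σ]
    congr 1
    exact div_self (ne_of_gt (mod_cast pow_pos hσ 2))
  have hdiv : MeasurableEmbedding (· / σ : ℝ → ℝ) :=
    measurableEmbedding_mulRight₀ (inv_ne_zero hσ.ne')
  calc ∫ x, millsTau σ x ∂(gaussianReal π ⟨σ ^ 2, sq_nonneg σ⟩)
      = σ⁻¹ * ∫ x, millsRatio (x / σ) ∂(gaussianReal π ⟨σ ^ 2, sq_nonneg σ⟩) := by
        rw [← integral_const_mul]
        congr 1 with x
        rw [millsTau, millsRatio]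
        ring
    _ = σ⁻¹ * ∫ y, millsRatio y ∂gaussianReal (π / σ) 1 := by
        rw [← hlaw, hdiv.integral_map]
    _ = 1 / π := by
        rw [integral_millsRatio_gaussianReal (div_pos hπ hσ)]
        field_simp
end

section
/- Let ξ be a random variable whose family of distributions {P_μ : μ ∈ M} has common support, let θ(μ) ∈ Θ ⊆ ℝ, and let θ̂(ξ) be unbiased for θ(μ). Let U be independent of ξ with distribution not depending on μ, and let θ̃(ξ, U) be unbiased with E[θ̃(ξ,U) | ξ] = θ̂(ξ). If E_μ|θ̃(ξ,U) − θ(μ)| = E_μ|θ̂(ξ) − θ(μ)| for all μ ∈ M, then θ̃(ξ, U) = θ̂(ξ) almost surely on the event {θ̂(ξ) ∈ Θ}. -/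
/-!
Since `θhat x` is the `Q`-mean of the section `θtilde (x, ·)`, Jensen gives
`|θhat x - t| ≤ ∫ |θtilde (x, u) - t| dQ` for every `t`; equal risks at `t = θ ν` force equality
for `P ν`-a.e. `x`, i.e. the section lies a.s. on one side of `θ ν`. By mutual absolute
continuity this holds `P μ`-a.e., simultaneously for a countable dense set of values of `θ`.
An integrable `g` lying a.s. on one side of `d` satisfies `∫ |g - ∫ g| ≤ 2 |∫ g - d|`, so when
`∫ g = θhat x` is a limit of such `d`, the section equals `θhat x` a.s.
-/

open MeasureTheory

section SignOfIntegral

variable {α : Type*} [MeasurableSpace α] {μ : Measure α} {f : α → ℝ}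

theorem integral_abs_eq_abs_integral_iff (hf : Integrable f μ) :
    ∫ a, |f a| ∂μ = |∫ a, f a ∂μ| ↔ 0 ≤ᵐ[μ] f ∨ f ≤ᵐ[μ] 0 := by
  constructor
  · intro h
    rcases le_total 0 (∫ a, f a ∂μ) with hpos | hneg
    · left
      rw [abs_of_nonneg hpos, eq_comm, integral_eq_iff_of_ae_le hf hf.abs
        (ae_of_all _ fun a => le_abs_self (f a))] at h
      filter_upwards [h] with a ha
      exact ha ▸ abs_nonneg (f a)
    · right
      rw [abs_of_nonpos hneg, ← integral_neg, eq_comm,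
        integral_eq_iff_of_ae_le (f := fun a => -f a) hf.neg hf.abs
          (ae_of_all _ fun a => neg_le_abs (f a))] at h
      filter_upwards [h] with a ha
      exact neg_nonneg.mp (ha ▸ abs_nonneg (f a))
  · rintro (hpos | hneg)
    · rw [integral_congr_ae (hpos.mono fun a => abs_of_nonneg),
        abs_of_nonneg (integral_nonneg_of_ae hpos)]
    · rw [integral_congr_ae (hneg.mono fun a => abs_of_nonpos), integral_neg,
        abs_of_nonpos (integral_nonpos_of_ae hneg)]

variable [IsProbabilityMeasure μ]

theorem integral_abs_sub_integral_le (hf : Integrable f μ) {d : ℝ}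
    (hd : (∀ᵐ a ∂μ, d ≤ f a) ∨ (∀ᵐ a ∂μ, f a ≤ d)) :
    ∫ a, |f a - ∫ b, f b ∂μ| ∂μ ≤ 2 * |∫ b, f b ∂μ - d| := by
  set t := ∫ b, f b ∂μ
  have hfd : Integrable (fun a => f a - d) μ := hf.sub (integrable_const d)
  have hmean : ∫ a, (f a - d) ∂μ = t - d := by
    rw [integral_sub hf (integrable_const d), integral_const, probReal_univ, one_smul]
  have hsign : ∫ a, |f a - d| ∂μ = |t - d| := by
    rw [← hmean, integral_abs_eq_abs_integral_iff hfd]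
    exact hd.imp (fun h => h.mono fun a => sub_nonneg.mpr)
      (fun h => h.mono fun a => sub_nonpos.mpr)
  calc ∫ a, |f a - t| ∂μ ≤ ∫ a, (|f a - d| + |d - t|) ∂μ :=
        integral_mono (hf.sub (integrable_const t)).abs
          (hfd.abs.add (integrable_const _)) fun a => abs_sub_le _ _ _
    _ = 2 * |t - d| := by
        rw [integral_add hfd.abs (integrable_const _), hsign, integral_const, probReal_univ,
          one_smul, abs_sub_comm d t]
        ring

theorem ae_eq_integral_of_mem_closure (hf : Integrable f μ) {S : Set ℝ}
    (hS : ∀ d ∈ S, (∀ᵐ a ∂μ, d ≤ f a) ∨ (∀ᵐ a ∂μ, f a ≤ d))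
    (hmean : ∫ a, f a ∂μ ∈ closure S) :
    ∀ᵐ a ∂μ, f a = ∫ b, f b ∂μ := by
  set t := ∫ b, f b ∂μ
  have hdev : Integrable (fun a => |f a - t|) μ := (hf.sub (integrable_const t)).abs
  have hzero : ∫ a, |f a - t| ∂μ ≤ 0 := by
    refine le_of_forall_pos_lt_add fun ε hε => ?_
    obtain ⟨d, hdS, hdt⟩ := Metric.mem_closure_iff.mp hmean (ε / 2) (half_pos hε)
    calc ∫ a, |f a - t| ∂μ ≤ 2 * |t - d| := integral_abs_sub_integral_le hf (hS d hdS)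
      _ < 0 + ε := by rw [← Real.dist_eq]; linarith
  have hae := (integral_eq_zero_iff_of_nonneg (fun a => abs_nonneg _) hdev).mp
    (le_antisymm hzero (integral_nonneg fun a => abs_nonneg _))
  filter_upwards [hae] with a ha
  exact sub_eq_zero.mp (abs_eq_zero.mp ha)

end SignOfIntegral

section Sections

variable {X U : Type*} [MeasurableSpace X] [MeasurableSpace U] {P : Measure X} {Q : Measure U}
  [IsFiniteMeasure P] [IsProbabilityMeasure Q]

theorem ae_ae_le_or_ge_of_integral_abs_sub_eq {F : X × U → ℝ} {g : X → ℝ} (t : ℝ)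
    (hF : Integrable F (P.prod Q)) (hcond : ∀ᵐ x ∂P, ∫ u, F (x, u) ∂Q = g x)
    (hrisk : ∫ y, |F y - t| ∂(P.prod Q) = ∫ x, |g x - t| ∂P) :
    ∀ᵐ x ∂P, (∀ᵐ u ∂Q, t ≤ F (x, u)) ∨ (∀ᵐ u ∂Q, F (x, u) ≤ t) := by
  have hFt : Integrable (fun y => F y - t) (P.prod Q) := hF.sub (integrable_const t)
  have hmean : ∀ᵐ x ∂P, ∫ u, (F (x, u) - t) ∂Q = g x - t := by
    filter_upwards [hF.prod_right_ae, hcond] with x hx hgx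
    rw [integral_sub hx (integrable_const t), integral_const, probReal_univ, one_smul, hgx]
  have hjensen : (fun x => |∫ u, (F (x, u) - t) ∂Q|) ≤ᵐ[P] fun x => ∫ u, |F (x, u) - t| ∂Q :=
    ae_of_all _ fun x => abs_integral_le_integral_abs
  have hrisk' : ∫ x, |∫ u, (F (x, u) - t) ∂Q| ∂P = ∫ x, ∫ u, |F (x, u) - t| ∂Q ∂P := by
    rw [← integral_prod _ hFt.abs, hrisk]
    exact integral_congr_ae (hmean.mono fun x hx => congrArg abs hx)
  have hequal := (integral_eq_iff_of_ae_le hFt.integral_prod_left.abs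
    hFt.abs.integral_prod_left hjensen).mp hrisk'
  filter_upwards [hequal, hF.prod_right_ae] with x hx hint
  rw [eq_comm, integral_abs_eq_abs_integral_iff (f := fun u => F (x, u) - t)
    (hint.sub (integrable_const t))] at hx
  exact hx.imp (fun h => h.mono fun u => sub_nonneg.mp) (fun h => h.mono fun u => sub_nonpos.mp)

end Sections

theorem stmt19_general {X 𝒰 M : Type*} [MeasurableSpace X] [MeasurableSpace 𝒰]
    (P : M → Measure X) (hprob : ∀ μ, IsProbabilityMeasure (P μ))
    (hsupp : ∀ μ ν, P μ ≪ P ν)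
    (θ : M → ℝ)
    (Q : Measure 𝒰) [IsProbabilityMeasure Q]
    (θhat : X → ℝ) (hθhat : Measurable θhat)
    (θtilde : X × 𝒰 → ℝ) (hθtilde : Measurable θtilde)
    (hunb' : ∀ μ, Integrable θtilde ((P μ).prod Q) ∧
        ∫ y, θtilde y ∂((P μ).prod Q) = θ μ)
    (hcond : ∀ μ, ∀ᵐ x ∂(P μ), ∫ u, θtilde (x, u) ∂Q = θhat x)
    (hrisk : ∀ μ, ∫ y, |θtilde y - θ μ| ∂((P μ).prod Q)
        = ∫ x, |θhat x - θ μ| ∂(P μ)) :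
    ∀ μ, ∀ᵐ y ∂((P μ).prod Q), θhat y.1 ∈ Set.range θ → θtilde y = θhat y.1 := by
  intro μ
  have hside : ∀ ν, ∀ᵐ x ∂(P μ),
      (∀ᵐ u ∂Q, θ ν ≤ θtilde (x, u)) ∨ (∀ᵐ u ∂Q, θtilde (x, u) ≤ θ ν) := fun ν =>
    have := hprob ν
    (hsupp μ ν).ae_le <|
      ae_ae_le_or_ge_of_integral_abs_sub_eq _ (hunb' ν).1 (hcond ν) (hrisk ν)
  obtain ⟨c, hcθ, hc, hdense⟩ :=
    (TopologicalSpace.IsSeparable.of_separableSpace (Set.range θ)).exists_countable_dense_subset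
  have := hprob μ
  have hsections : ∀ᵐ x ∂(P μ), θhat x ∈ closure c → ∀ᵐ u ∂Q, θtilde (x, u) = θhat x := by
    have hsidec : ∀ᵐ x ∂(P μ), ∀ d ∈ c,
        (∀ᵐ u ∂Q, d ≤ θtilde (x, u)) ∨ (∀ᵐ u ∂Q, θtilde (x, u) ≤ d) :=
      (ae_ball_iff hc).mpr fun d hd => by
        obtain ⟨ν, rfl⟩ := hcθ hd
        exact hside ν
    filter_upwards [hsidec, (hunb' μ).1.prod_right_ae, hcond μ] with x hx hint hmean hclos
    rw [← hmean] at hclos ⊢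
    exact ae_eq_integral_of_mem_closure hint hx hclos
  have hmeas : MeasurableSet {y : X × 𝒰 | θhat y.1 ∈ closure c → θtilde y = θhat y.1} :=
    (isClosed_closure.measurableSet.preimage (hθhat.comp measurable_fst)).imp
      (measurableSet_eq_fun hθtilde (hθhat.comp measurable_fst))
  filter_upwards [(Measure.ae_prod_iff_ae_ae hmeas).mpr
    (hsections.mono fun x hx => Filter.eventually_imp_distrib_left.mpr hx)] with y hy hθy
  exact hy (hdense hθy)

/-- Uniqueness of the minimum-risk unbiased estimator under absolute value loss:
if a randomized unbiased estimator θ̃(ξ,U) Rao–Blackwellizes to θ̂(ξ) and has the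
same absolute-deviation risk, then θ̃(ξ,U) = θ̂(ξ) a.s. on the event θ̂(ξ) ∈ Θ. -/
theorem stmt19 {X 𝒰 M : Type*} [MeasurableSpace X] [MeasurableSpace 𝒰]
    (P : M → Measure X) (hprob : ∀ μ, IsProbabilityMeasure (P μ))
    (hsupp : ∀ μ ν, P μ ≪ P ν)
    (θ : M → ℝ)
    (Q : Measure 𝒰) [IsProbabilityMeasure Q]
    (θhat : X → ℝ) (hθhat : Measurable θhat)
    (θtilde : X × 𝒰 → ℝ) (hθtilde : Measurable θtilde)
    (hunb : ∀ μ, Integrable θhat (P μ) ∧ ∫ x, θhat x ∂(P μ) = θ μ)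
    (hunb' : ∀ μ, Integrable θtilde ((P μ).prod Q) ∧
        ∫ y, θtilde y ∂((P μ).prod Q) = θ μ)
    (hcond : ∀ μ, ∀ᵐ x ∂(P μ), ∫ u, θtilde (x, u) ∂Q = θhat x)
    (hrisk : ∀ μ, ∫ y, |θtilde y - θ μ| ∂((P μ).prod Q)
        = ∫ x, |θhat x - θ μ| ∂(P μ)) :
    ∀ μ, ∀ᵐ y ∂((P μ).prod Q), θhat y.1 ∈ Set.range θ → θtilde y = θhat y.1 :=
  stmt19_general P hprob hsupp θ Q θhat hθhat θtilde hθtilde hunb' hcond hrisk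
end
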